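/- Let I be an arbitrary index set and for each α ∈ I let μ_α be a probability measure on ℝ with μ_α([0,∞)) = 1 and finite mean ∫ x dμ_α(x) < ∞. Fix any constant c ∈ (0,∞), and for each α let ν_α be the size-biased measure of the pushforward of μ_α under the map x ↦ x + c. Then the family {μ_α} is uniformly integrable (i.e., for every δ > 0 there exists L < ∞ such that ∫_{(L,∞)} x dμ_α(x) < δ for all α ∈ I) if and only if the family {ν_α} is tight (i.e., for every ε > 0 there exists L < ∞ such that ν_α((L,∞)) < ε for all α ∈ I). -/

import Mathlib

/-!
Write `ν = μ.map (· + c)`. On `(L, ∞)` with `L ≥ 1` one has `x ≤ x + c ≤ (1 + c) x`, so the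
family `μ` has uniformly small tails `∫_{(L,∞)} x dμ` iff the shifted family `ν` has. For `ν`,
whose means are at least `c`, the size-biased tail is `ν*(L, ∞) = ∫_{(L,∞)} y dν / ∫ y dν`.
Dividing by a mean `≥ c` turns small tail integrals into small size-biased tails. Conversely,
tightness at level `1/2` bounds the means uniformly, because `∫ y dν ≤ ∫_{(B,∞)} y dν + B`, and
then `∫_{(L,∞)} y dν = ν*(L, ∞) · ∫ y dν` is uniformly small.
-/

open MeasureTheory

/-- The size-biased measure of `μ`: `dμ*(x) = (x / ∫ y dμ(y)) dμ(x)`. -/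
noncomputable def sizeBiased (μ : Measure ℝ) : Measure ℝ :=
  μ.withDensity (fun x => ENNReal.ofReal (x / ∫ y, y ∂μ))

open Set

section SingleMeasure

variable {μ : Measure ℝ}

lemma ae_nonneg_of_measure_Ici_eq_one [IsProbabilityMeasure μ] (h : μ (Ici 0) = 1) :
    ∀ᵐ x ∂μ, 0 ≤ x :=
  (ae_iff_measure_eq measurableSet_Ici.nullMeasurableSet).2 (by rw [measure_univ]; exact h)

lemma antitone_setIntegral_Ioi_id (hnonneg : ∀ᵐ x ∂μ, 0 ≤ x) (hint : Integrable id μ) :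
    Antitone fun L => ∫ x in Ioi L, x ∂μ := fun _ _ hLL' =>
  setIntegral_mono_set hint.integrableOn (ae_restrict_of_ae hnonneg)
    (Ioi_subset_Ioi hLL').eventuallyLE

lemma setIntegral_Ioi_add_const_le [IsFiniteMeasure μ] (hint : Integrable id μ) {c L : ℝ}
    (hc : 0 ≤ c) (hL : 1 ≤ L) :
    ∫ x in Ioi L, (x + c) ∂μ ≤ (1 + c) * ∫ x in Ioi L, x ∂μ := by
  rw [← integral_const_mul]
  refine setIntegral_mono_on (hint.add (integrable_const c)).integrableOn
    (hint.const_mul _).integrableOn measurableSet_Ioi fun x hx => ?_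
  nlinarith [mem_Ioi.1 hx]

lemma setIntegral_Ioi_le_add_const [IsFiniteMeasure μ] (hint : Integrable id μ) {c : ℝ}
    (hc : 0 ≤ c) (L : ℝ) : ∫ x in Ioi L, x ∂μ ≤ ∫ x in Ioi L, (x + c) ∂μ :=
  setIntegral_mono hint.integrableOn (hint.add (integrable_const c)).integrableOn
    fun _ => le_add_of_nonneg_right hc

lemma setIntegral_Ioi_map_add_const (c L : ℝ) :
    ∫ y in Ioi (L + c), y ∂(μ.map (· + c)) = ∫ x in Ioi L, (x + c) ∂μ := by
  rw [setIntegral_map measurableSet_Ioi measurable_id'.aestronglyMeasurable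
    (measurable_add_const c).aemeasurable, preimage_add_const_Ioi, add_sub_cancel_right]

lemma integral_id_map_add_const [IsProbabilityMeasure μ] (hint : Integrable id μ) (c : ℝ) :
    ∫ y, y ∂(μ.map (· + c)) = ∫ x, x ∂μ + c := by
  rw [integral_map (measurable_add_const c).aemeasurable measurable_id'.aestronglyMeasurable,
    integral_add (f := fun x => x) hint (integrable_const c), integral_const, probReal_univ,
    one_smul]

lemma integrable_id_map_add_const [IsFiniteMeasure μ] (hint : Integrable id μ) (c : ℝ) :
    Integrable id (μ.map (· + c)) :=
  (integrable_map_measure aestronglyMeasurable_id (measurable_add_const c).aemeasurable).2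
    (hint.add (integrable_const c))

lemma ae_nonneg_map_add_const (hnonneg : ∀ᵐ x ∂μ, 0 ≤ x) {c : ℝ} (hc : 0 ≤ c) :
    ∀ᵐ y ∂(μ.map (· + c)), 0 ≤ y :=
  (ae_map_iff (measurable_add_const c).aemeasurable measurableSet_Ici).2
    (hnonneg.mono fun _ hx => add_nonneg hx hc)

lemma sizeBiased_apply (hnonneg : ∀ᵐ x ∂μ, 0 ≤ x) (hint : Integrable id μ) {s : Set ℝ}
    (hs : MeasurableSet s) :
    sizeBiased μ s = ENNReal.ofReal ((∫ x in s, x ∂μ) / ∫ x, x ∂μ) := by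
  have hmean : 0 ≤ ∫ x, x ∂μ := integral_nonneg_of_ae hnonneg
  rw [sizeBiased, withDensity_apply _ hs, ← integral_div,
    ofReal_integral_eq_lintegral_ofReal (f := fun x => x / _) (hint.div_const _).integrableOn]
  exact (ae_restrict_of_ae hnonneg).mono fun x hx => div_nonneg hx hmean

lemma sizeBiased_lt_ofReal_iff (hnonneg : ∀ᵐ x ∂μ, 0 ≤ x) (hint : Integrable id μ)
    (hmean : 0 < ∫ x, x ∂μ) {s : Set ℝ} (hs : MeasurableSet s) {ε : ℝ} (hε : 0 < ε) :
    sizeBiased μ s < ENNReal.ofReal ε ↔ ∫ x in s, x ∂μ < ε * ∫ x, x ∂μ := by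
  rw [sizeBiased_apply hnonneg hint hs, ENNReal.ofReal_lt_ofReal_iff hε, div_lt_iff₀ hmean]

lemma integral_id_le_setIntegral_Ioi_add [IsProbabilityMeasure μ] (hint : Integrable id μ)
    {B : ℝ} (hB : 0 ≤ B) : ∫ x, x ∂μ ≤ ∫ x in Ioi B, x ∂μ + B := by
  have hle : ∫ x in (Ioi B)ᶜ, x ∂μ ≤ ∫ _ in (Ioi B)ᶜ, B ∂μ :=
    setIntegral_mono_on hint.integrableOn (integrableOn_const (measure_ne_top _ _))
      measurableSet_Ioi.compl fun x hx => not_lt.1 hx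
  have hB' : ∫ _ in (Ioi B)ᶜ, B ∂μ ≤ B := by
    rw [setIntegral_const, smul_eq_mul]
    exact mul_le_of_le_one_left hB measureReal_le_one
  rw [← integral_add_compl (f := fun x => x) measurableSet_Ioi hint]
  linarith

end SingleMeasure

section Family

variable {I : Type*}

def UniformlyIntegrableAtTop (μ : I → Measure ℝ) : Prop :=
  ∀ δ : ℝ, 0 < δ → ∃ L : ℝ, ∀ α, ∫ x in Ioi L, x ∂(μ α) < δ

def TightAtTop (ν : I → Measure ℝ) : Prop :=
  ∀ ε : ℝ, 0 < ε → ∃ L : ℝ, ∀ α, ν α (Ioi L) < ENNReal.ofReal ε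

theorem uniformlyIntegrableAtTop_map_add_const_iff {μ : I → Measure ℝ}
    [∀ α, IsFiniteMeasure (μ α)] (hnonneg : ∀ α, ∀ᵐ x ∂μ α, 0 ≤ x)
    (hint : ∀ α, Integrable id (μ α)) {c : ℝ} (hc : 0 ≤ c) :
    UniformlyIntegrableAtTop (fun α => (μ α).map (· + c)) ↔ UniformlyIntegrableAtTop μ := by
  constructor
  · intro h δ hδ
    obtain ⟨L, hL⟩ := h δ hδ
    refine ⟨L - c, fun α => ?_⟩
    calc ∫ x in Ioi (L - c), x ∂μ α
        ≤ ∫ x in Ioi (L - c), (x + c) ∂μ α := setIntegral_Ioi_le_add_const (hint α) hc _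
      _ = ∫ y in Ioi L, y ∂(μ α).map (· + c) := by
        rw [← setIntegral_Ioi_map_add_const, sub_add_cancel]
      _ < δ := hL α
  · intro h δ hδ
    obtain ⟨L, hL⟩ := h (δ / (1 + c)) (by positivity)
    refine ⟨max L 1 + c, fun α => ?_⟩
    calc ∫ y in Ioi (max L 1 + c), y ∂(μ α).map (· + c)
        = ∫ x in Ioi (max L 1), (x + c) ∂μ α := setIntegral_Ioi_map_add_const c _
      _ ≤ (1 + c) * ∫ x in Ioi (max L 1), x ∂μ α :=
        setIntegral_Ioi_add_const_le (hint α) hc (le_max_right L 1)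
      _ ≤ (1 + c) * ∫ x in Ioi L, x ∂μ α :=
        mul_le_mul_of_nonneg_left
          (antitone_setIntegral_Ioi_id (hnonneg α) (hint α) (le_max_left L 1)) (by positivity)
      _ < (1 + c) * (δ / (1 + c)) := by gcongr; exact hL α
      _ = δ := by field_simp

theorem exists_integral_id_le_of_tightAtTop_sizeBiased {ν : I → Measure ℝ}
    [∀ α, IsProbabilityMeasure (ν α)] (hnonneg : ∀ α, ∀ᵐ x ∂ν α, 0 ≤ x)
    (hint : ∀ α, Integrable id (ν α)) (h : TightAtTop fun α => sizeBiased (ν α)) :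
    ∃ M, 0 < M ∧ ∀ α, ∫ x, x ∂ν α ≤ M := by
  obtain ⟨B₀, hB₀⟩ := h (1 / 2) (by norm_num)
  set B := max B₀ 1
  have hB : 1 ≤ B := le_max_right B₀ 1
  refine ⟨2 * B, by positivity, fun α => ?_⟩
  rcases le_or_gt (∫ x, x ∂ν α) 0 with hm | hm
  · linarith
  have htail : sizeBiased (ν α) (Ioi B) < ENNReal.ofReal (1 / 2) :=
    (measure_mono (Ioi_subset_Ioi (le_max_left B₀ 1))).trans_lt (hB₀ α)
  rw [sizeBiased_lt_ofReal_iff (hnonneg α) (hint α) hm measurableSet_Ioi (by norm_num)] at htail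
  linarith [integral_id_le_setIntegral_Ioi_add (hint α) (zero_le_one.trans hB)]

theorem uniformlyIntegrableAtTop_iff_tightAtTop_sizeBiased {ν : I → Measure ℝ}
    [∀ α, IsProbabilityMeasure (ν α)] (hnonneg : ∀ α, ∀ᵐ x ∂ν α, 0 ≤ x)
    (hint : ∀ α, Integrable id (ν α)) {c : ℝ} (hc : 0 < c) (hmean : ∀ α, c ≤ ∫ x, x ∂ν α) :
    UniformlyIntegrableAtTop ν ↔ TightAtTop fun α => sizeBiased (ν α) := by
  have hm α : 0 < ∫ x, x ∂ν α := hc.trans_le (hmean α)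
  constructor
  · intro h ε hε
    obtain ⟨L, hL⟩ := h (ε * c) (by positivity)
    refine ⟨L, fun α => ?_⟩
    rw [sizeBiased_lt_ofReal_iff (hnonneg α) (hint α) (hm α) measurableSet_Ioi hε]
    nlinarith [hL α, hmean α]
  · intro h δ hδ
    obtain ⟨M, hM, hmM⟩ := exists_integral_id_le_of_tightAtTop_sizeBiased hnonneg hint h
    obtain ⟨L, hL⟩ := h (δ / M) (by positivity)
    refine ⟨L, fun α => ?_⟩
    have hα := hL α
    rw [sizeBiased_lt_ofReal_iff (hnonneg α) (hint α) (hm α) measurableSet_Ioi (by positivity)]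
      at hα
    calc ∫ x in Ioi L, x ∂ν α < δ / M * ∫ x, x ∂ν α := hα
      _ ≤ δ / M * M := by gcongr; exact hmM α
      _ = δ := by field_simp

end Family

/-- For a family of nonnegative probability measures with finite means, and any fixed
`c > 0`, the family is uniformly integrable iff the family of size-biased measures of
the `c`-shifted measures is tight. -/
theorem uniformIntegrable_iff_shifted_sizeBiased_tight
    {I : Type*} (μ : I → Measure ℝ) (c : ℝ) (hc : 0 < c)
    (hprob : ∀ α, IsProbabilityMeasure (μ α))
    (hsupp : ∀ α, μ α (Set.Ici 0) = 1)
    (hint : ∀ α, Integrable id (μ α)) :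
    (∀ δ : ℝ, 0 < δ → ∃ L : ℝ, ∀ α, ∫ x in Set.Ioi L, x ∂(μ α) < δ) ↔
    (∀ ε : ℝ, 0 < ε → ∃ L : ℝ, ∀ α,
        sizeBiased (Measure.map (fun x => x + c) (μ α)) (Set.Ioi L) < ENNReal.ofReal ε) := by
  have hnonneg α : ∀ᵐ x ∂μ α, 0 ≤ x := ae_nonneg_of_measure_Ici_eq_one (hsupp α)
  have _ α : IsProbabilityMeasure ((μ α).map (· + c)) :=
    Measure.isProbabilityMeasure_map (measurable_add_const c).aemeasurable
  have hmean α : c ≤ ∫ y, y ∂(μ α).map (· + c) := by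
    rw [integral_id_map_add_const (hint α)]
    linarith [integral_nonneg_of_ae (hnonneg α)]
  exact (uniformlyIntegrableAtTop_map_add_const_iff hnonneg hint hc.le).symm.trans
    (uniformlyIntegrableAtTop_iff_tightAtTop_sizeBiased
      (fun α => ae_nonneg_map_add_const (hnonneg α) hc.le)
      (fun α => integrable_id_map_add_const (hint α) c) hc hmean)
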